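/- arXiv:2005.11492 — 2 statements merged into one kernel-verified Lean document; each statement's English description precedes it below -/
import Mathlib

section
/- Consider the positive feedback interconnection (u₁ = y₂, u₂ = y₁) of systems H₁ and H₂ satisfying Assumptions I, II and III with constant γ ∈ (0,1). If along a closed-loop trajectory the derivative of the output of H₂ vanishes identically, ẏ₂(t) ≡ 0 over a nondegenerate time interval, then on that interval x₁(t) ≡ 0 and x₂(t) ≡ 0 (and hence u₁ ≡ u₂ ≡ y₁ ≡ y₂ ≡ 0). -/
noncomputable section

open scoped RealInnerProductSpace
open Filter

abbrev Vec (n : ℕ) : Type := EuclideanSpace ℝ (Fin n)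

def IsTrajectory {p m : ℕ} (f : Vec p → Vec m → Vec p)
    (x : ℝ → Vec p) (u : ℝ → Vec m) : Prop :=
  ∀ t : ℝ, HasDerivAt x (f (x t) (u t)) t

def PosDefFn {E : Type*} [Zero E] (V : E → ℝ) : Prop :=
  V 0 = 0 ∧ ∀ x, x ≠ 0 → 0 < V x

def NIStorage {p m : ℕ} (f : Vec p → Vec m → Vec p) (h : Vec p → Vec m)
    (V : Vec p → ℝ) : Prop :=
  ∀ (x : ℝ → Vec p) (u : ℝ → Vec m), IsTrajectory f x u →
    ∀ t : ℝ, deriv (fun s => V (x s)) t ≤ ⟪u t, deriv (fun s => h (x s)) t⟫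

def OSNIStorage {p m : ℕ} (f : Vec p → Vec m → Vec p) (h : Vec p → Vec m)
    (V : Vec p → ℝ) (δ : ℝ) : Prop :=
  ∀ (x : ℝ → Vec p) (u : ℝ → Vec m), IsTrajectory f x u →
    ∀ t : ℝ, deriv (fun s => V (x s)) t ≤
      ⟪u t, deriv (fun s => h (x s)) t⟫ - δ * ‖deriv (fun s => h (x s)) t‖ ^ 2

def linF {q m : ℕ} (A : Matrix (Fin q) (Fin q) ℝ) (B : Matrix (Fin q) (Fin m) ℝ) :
    Vec q → Vec m → Vec q :=
  fun x u => Matrix.toEuclideanLin A x + Matrix.toEuclideanLin B u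

def linH {q m : ℕ} (C : Matrix (Fin m) (Fin q) ℝ) : Vec q → Vec m :=
  fun x => Matrix.toEuclideanLin C x

/-- Assumption I for a system (f, h): over any nondegenerate time interval, the output
remains constant iff the state remains constant; moreover the state is identically zero
iff the output is identically zero. -/
def AssumptionI {p m : ℕ} (f : Vec p → Vec m → Vec p) (h : Vec p → Vec m) : Prop :=
  ∀ (x : ℝ → Vec p) (u : ℝ → Vec m), IsTrajectory f x u →
    ∀ ta tb : ℝ, ta < tb →
      (((∀ s ∈ Set.Icc ta tb, ∀ s' ∈ Set.Icc ta tb, x s = x s') ↔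
          (∀ s ∈ Set.Icc ta tb, ∀ s' ∈ Set.Icc ta tb, h (x s) = h (x s'))) ∧
        ((∀ s ∈ Set.Icc ta tb, x s = 0) ↔ (∀ s ∈ Set.Icc ta tb, h (x s) = 0)))

/-- Assumption II for a system (f, h): over any nondegenerate time interval, the state
remaining constant implies the input remains constant; moreover the state being
identically zero implies the input is identically zero. -/
def AssumptionII {p m : ℕ} (f : Vec p → Vec m → Vec p) (h : Vec p → Vec m) : Prop :=
  ∀ (x : ℝ → Vec p) (u : ℝ → Vec m), IsTrajectory f x u →
    ∀ ta tb : ℝ, ta < tb →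
      (((∀ s ∈ Set.Icc ta tb, ∀ s' ∈ Set.Icc ta tb, x s = x s') →
          (∀ s ∈ Set.Icc ta tb, ∀ s' ∈ Set.Icc ta tb, u s = u s')) ∧
        ((∀ s ∈ Set.Icc ta tb, x s = 0) → (∀ s ∈ Set.Icc ta tb, u s = 0)))

/-- Assumption III for the open-loop cascade of H₁ = (f₁, h₁) followed by H₂ = (f₂, h₂):
there is a uniform constant γ ∈ (0,1) such that whenever H₁ is driven by a constant input
u₁bar, its output is fed as input to H₂, and the output of H₂ is constant, y₂(t) ≡ y₂bar,
one has u₁barᵀ y₂bar ≤ γ |u₁bar|². -/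
def AssumptionIII {p m : ℕ} (f₁ : Vec p → Vec m → Vec p) (h₁ : Vec p → Vec m)
    (f₂ : Vec p → Vec m → Vec p) (h₂ : Vec p → Vec m) (γ : ℝ) : Prop :=
  ∀ (x₁ : ℝ → Vec p) (u₁ : ℝ → Vec m) (x₂ : ℝ → Vec p)
    (u₁bar y₂bar : Vec m) (ta tb : ℝ), ta < tb →
    IsTrajectory f₁ x₁ u₁ →
    IsTrajectory f₂ x₂ (fun t => h₁ (x₁ t)) →
    (∀ s ∈ Set.Icc ta tb, u₁ s = u₁bar) →
    (∀ s ∈ Set.Icc ta tb, h₂ (x₂ s) = y₂bar) →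
    ⟪u₁bar, y₂bar⟫ ≤ γ * ‖u₁bar‖ ^ 2

/-- The positive feedback interconnection of H₁ = (f₁, h₁) and H₂ = (f₂, h₂) with zero
external input: u₁ = y₂ and u₂ = y₁. -/
def ClosedLoop {p m : ℕ} (f₁ : Vec p → Vec m → Vec p) (h₁ : Vec p → Vec m)
    (f₂ : Vec p → Vec m → Vec p) (h₂ : Vec p → Vec m)
    (x₁ x₂ : ℝ → Vec p) : Prop :=
  IsTrajectory f₁ x₁ (fun t => h₂ (x₂ t)) ∧
  IsTrajectory f₂ x₂ (fun t => h₁ (x₁ t))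


/-! The output y₂ is constant on the interval; in the closed loop that constant is also the
input of H₁, so Assumption III applied with ū₁ = ȳ₂ gives ‖ȳ₂‖² ≤ γ ‖ȳ₂‖², whence ȳ₂ = 0
as γ < 1. Assumption I for H₂ then forces x₂ ≡ 0, Assumption II for H₂ its input y₁ ≡ 0,
and Assumption I for H₁ finally x₁ ≡ 0. -/

open Set

theorem eq_left_of_deriv_eq_zero_on_Icc {E : Type*} [NormedAddCommGroup E] [NormedSpace ℝ E]
    {g : ℝ → E} {a b : ℝ} (hg : Differentiable ℝ g) (hg' : ∀ t ∈ Icc a b, deriv g t = 0) :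
    ∀ t ∈ Icc a b, g t = g a :=
  constant_of_has_deriv_right_zero hg.continuous.continuousOn fun t ht =>
    (hg' t (Ico_subset_Icc_self ht) ▸ (hg t).hasDerivAt).hasDerivWithinAt

theorem IsTrajectory.differentiable {p m : ℕ} {f : Vec p → Vec m → Vec p} {x : ℝ → Vec p}
    {u : ℝ → Vec m} (hx : IsTrajectory f x u) : Differentiable ℝ x :=
  fun t => (hx t).differentiableAt

theorem eq_zero_of_norm_sq_le_mul_norm_sq {E : Type*} [NormedAddCommGroup E]
    {γ : ℝ} (hγ : γ < 1) {v : E} (hv : ‖v‖ ^ 2 ≤ γ * ‖v‖ ^ 2) : v = 0 := by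
  have hnorm : ‖v‖ ^ 2 ≤ 0 := by nlinarith [sq_nonneg ‖v‖]
  simpa using hnorm

namespace ClosedLoop

variable {p m : ℕ} {f₁ f₂ : Vec p → Vec m → Vec p} {h₁ h₂ : Vec p → Vec m} {x₁ x₂ : ℝ → Vec p}
  {ta tb : ℝ}

theorem const_output₂_eq_zero {γ : ℝ} (hAIII : AssumptionIII f₁ h₁ f₂ h₂ γ) (hγ : γ < 1)
    (hcl : ClosedLoop f₁ h₁ f₂ h₂ x₁ x₂) (hab : ta < tb) {U : Vec m}
    (hU : ∀ s ∈ Icc ta tb, h₂ (x₂ s) = U) : U = 0 := by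
  have hUU := hAIII x₁ _ x₂ U U ta tb hab hcl.1 hcl.2 hU hU
  rw [real_inner_self_eq_norm_sq] at hUU
  exact eq_zero_of_norm_sq_le_mul_norm_sq hγ hUU

theorem states_eq_zero_of_output₂_eq_zero (hAI₁ : AssumptionI f₁ h₁) (hAI₂ : AssumptionI f₂ h₂)
    (hAII₂ : AssumptionII f₂ h₂) (hcl : ClosedLoop f₁ h₁ f₂ h₂ x₁ x₂) (hab : ta < tb)
    (hy₂ : ∀ s ∈ Icc ta tb, h₂ (x₂ s) = 0) :
    ∀ t ∈ Icc ta tb, x₁ t = 0 ∧ x₂ t = 0 ∧ h₁ (x₁ t) = 0 := by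
  have hx₂ := ((hAI₂ x₂ _ hcl.2 ta tb hab).2).mpr hy₂
  have hy₁ := ((hAII₂ x₂ _ hcl.2 ta tb hab).2) hx₂
  have hx₁ := ((hAI₁ x₁ _ hcl.1 ta tb hab).2).mpr hy₁
  exact fun t ht => ⟨hx₁ t ht, hx₂ t ht, hy₁ t ht⟩

end ClosedLoop

theorem stmt2_general {p m : ℕ}
    (f₁ f₂ : Vec p → Vec m → Vec p) (h₁ h₂ : Vec p → Vec m)
    (hh₂ : ContDiff ℝ 1 h₂)
    (hAI₁ : AssumptionI f₁ h₁) (hAI₂ : AssumptionI f₂ h₂)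
    (hAII₂ : AssumptionII f₂ h₂)
    (γ : ℝ) (hγ1 : γ < 1)
    (hAIII : AssumptionIII f₁ h₁ f₂ h₂ γ)
    (x₁ x₂ : ℝ → Vec p)
    (hcl : ClosedLoop f₁ h₁ f₂ h₂ x₁ x₂)
    (ta tb : ℝ) (htatb : ta < tb)
    (hy₂dot : ∀ t ∈ Set.Icc ta tb, deriv (fun s => h₂ (x₂ s)) t = 0) :
    ∀ t ∈ Set.Icc ta tb,
      x₁ t = 0 ∧ x₂ t = 0 ∧ h₁ (x₁ t) = 0 ∧ h₂ (x₂ t) = 0 := by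
  have hy₂_const : ∀ t ∈ Icc ta tb, h₂ (x₂ t) = h₂ (x₂ ta) :=
    eq_left_of_deriv_eq_zero_on_Icc
      ((hh₂.differentiable one_ne_zero).comp hcl.2.differentiable) hy₂dot
  have hy₂_zero : ∀ t ∈ Icc ta tb, h₂ (x₂ t) = 0 := fun t ht =>
    (hy₂_const t ht).trans (hcl.const_output₂_eq_zero hAIII hγ1 htatb hy₂_const)
  intro t ht
  obtain ⟨hx₁, hx₂, hy₁⟩ :=
    hcl.states_eq_zero_of_output₂_eq_zero hAI₁ hAI₂ hAII₂ htatb hy₂_zero t ht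
  exact ⟨hx₁, hx₂, hy₁, hy₂_zero t ht⟩

/-- In the positive feedback interconnection (u₁ = y₂, u₂ = y₁) of H₁
and H₂ satisfying Assumptions I, II and III (with constant γ ∈ (0,1)), if the derivative
of the output of H₂ vanishes identically on a nondegenerate time interval, then on that
interval x₁ ≡ 0 and x₂ ≡ 0 (and hence u₁ ≡ u₂ ≡ y₁ ≡ y₂ ≡ 0). -/
theorem stmt2 {p m : ℕ}
    (f₁ f₂ : Vec p → Vec m → Vec p) (h₁ h₂ : Vec p → Vec m)
    (K₁ K₂ : NNReal)
    (hf₁ : LipschitzWith K₁ (Function.uncurry f₁))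
    (hf₂ : LipschitzWith K₂ (Function.uncurry f₂))
    (hh₁ : ContDiff ℝ 1 h₁) (hh₂ : ContDiff ℝ 1 h₂)
    (hAI₁ : AssumptionI f₁ h₁) (hAI₂ : AssumptionI f₂ h₂)
    (hAII₁ : AssumptionII f₁ h₁) (hAII₂ : AssumptionII f₂ h₂)
    (γ : ℝ) (hγ0 : 0 < γ) (hγ1 : γ < 1)
    (hAIII : AssumptionIII f₁ h₁ f₂ h₂ γ)
    (x₁ x₂ : ℝ → Vec p)
    (hcl : ClosedLoop f₁ h₁ f₂ h₂ x₁ x₂)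
    (ta tb : ℝ) (htatb : ta < tb)
    (hy₂dot : ∀ t ∈ Set.Icc ta tb, deriv (fun s => h₂ (x₂ s)) t = 0) :
    ∀ t ∈ Set.Icc ta tb,
      x₁ t = 0 ∧ x₂ t = 0 ∧ h₁ (x₁ t) = 0 ∧ h₂ (x₂ t) = 0 :=
  stmt2_general f₁ f₂ h₁ h₂ hh₂ hAI₁ hAI₂ hAII₂ γ hγ1 hAIII x₁ x₂ hcl ta tb htatb hy₂dot
end
end

section
/- Let (A,B,C) be a realization of a linear OSNI system with output strictness δ > 0 in the dissipativity sense, with positive definite C¹ storage function V₂. Consider n identical copies ẋᵢ = Axᵢ + Buᵢ, yᵢ = Cxᵢ (i = 1,…,n) connected according to an undirected graph with adjacency matrix a = [a_{ij}] (symmetric, zero diagonal, entries in {0,1}), so that the networked system (transfer function 𝓛ₙ ⊗ M(s)) has stacked input U₂ = (u₁,…,uₙ) and stacked output Y₂ whose i-th block is (Y₂)ᵢ = Σⱼ a_{ij}(yᵢ − yⱼ). Then the function V̂₂(x₁,…,xₙ) := (1/2) Σᵢ Σⱼ a_{ij} V₂(xᵢ − xⱼ) satisfies, along every trajectory, d/dt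 V̂₂ ≤ U₂ᵀ(dY₂/dt) − (δ/2) Σᵢ Σⱼ a_{ij} |ẏᵢ − ẏⱼ|² (the OSNI-like property of the networked linear OSNI system). -/
noncomputable section

open scoped RealInnerProductSpace
open Filter

/-! Each edge (i, j) carries the error system xᵢ − xⱼ, which by linearity is again a trajectory
of (A, B) with input uᵢ − uⱼ, so the OSNI inequality holds for V₂(xᵢ − xⱼ). Summing these with the
nonnegative weights a_{ij}, the symmetry of a turns ½ Σᵢⱼ a_{ij}⟪uᵢ − uⱼ, ẏᵢ − ẏⱼ⟫ into the supply
rate Σᵢ ⟪uᵢ, Σⱼ a_{ij}(ẏᵢ − ẏⱼ)⟫ of the networked system. -/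

section Linear

variable {q m : ℕ} (A : Matrix (Fin q) (Fin q) ℝ) (B : Matrix (Fin q) (Fin m) ℝ)
  (C : Matrix (Fin m) (Fin q) ℝ)

theorem HasDerivAt.linH {x : ℝ → Vec q} {v : Vec q} {t : ℝ} (hx : HasDerivAt x v t) :
    HasDerivAt (fun s => linH C (x s)) (linH C v) t :=
  (LinearMap.toContinuousLinearMap (Matrix.toEuclideanLin C)).hasFDerivAt.comp_hasDerivAt t hx

theorem IsTrajectory.linF_sub {x x' : ℝ → Vec q} {u u' : ℝ → Vec m}
    (hx : IsTrajectory (linF A B) x u) (hx' : IsTrajectory (linF A B) x' u') :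
    IsTrajectory (linF A B) (fun s => x s - x' s) (fun s => u s - u' s) := by
  intro s
  have h : HasDerivAt (fun s => x s - x' s)
      (linF A B (x s) (u s) - linF A B (x' s) (u' s)) s := (hx s).fun_sub (hx' s)
  convert h using 1
  simp only [linF, map_sub]
  abel

theorem OSNIStorage.deriv_comp_sub_le {V : Vec q → ℝ} {δ : ℝ}
    (hV : OSNIStorage (linF A B) (linH C) V δ) {x x' : ℝ → Vec q} {u u' : ℝ → Vec m}
    (hx : IsTrajectory (linF A B) x u) (hx' : IsTrajectory (linF A B) x' u') (t : ℝ) :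
    deriv (fun s => V (x s - x' s)) t ≤
      ⟪u t - u' t, linH C (linF A B (x t) (u t)) - linH C (linF A B (x' t) (u' t))⟫ -
        δ * ‖linH C (linF A B (x t) (u t)) - linH C (linF A B (x' t) (u' t))‖ ^ 2 := by
  have hy : HasDerivAt (fun s => linH C (x s - x' s))
      (linH C (linF A B (x t) (u t)) - linH C (linF A B (x' t) (u' t))) t := by
    simpa only [linH, map_sub] using ((hx t).linH C).fun_sub ((hx' t).linH C)
  simpa only [hy.deriv] using hV _ _ (hx.linF_sub A B hx') t

end Linear

theorem sum_sum_mul_inner_sub_sub {E : Type*} [NormedAddCommGroup E] [InnerProductSpace ℝ E]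
    {ι : Type*} [Fintype ι] {a : ι → ι → ℝ} (ha : ∀ i j, a i j = a j i) (u w : ι → E) :
    ∑ i, ∑ j, a i j * ⟪u i - u j, w i - w j⟫ = 2 * ∑ i, ⟪u i, ∑ j, a i j • (w i - w j)⟫ := by
  have hswap : ∑ i, ∑ j, a i j * ⟪u j, w i - w j⟫ = -∑ i, ∑ j, a i j * ⟪u i, w i - w j⟫ := by
    rw [Finset.sum_comm, ← Finset.sum_neg_distrib]
    refine Finset.sum_congr rfl fun i _ => ?_
    rw [← Finset.sum_neg_distrib]
    refine Finset.sum_congr rfl fun j _ => ?_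
    rw [ha j i, ← neg_sub (w i) (w j), inner_neg_right, mul_neg]
  simp only [inner_sub_left, mul_sub, Finset.sum_sub_distrib, hswap, inner_sum,
    real_inner_smul_right]
  ring

theorem stmt6_general {q m n : ℕ}
    (A : Matrix (Fin q) (Fin q) ℝ) (B : Matrix (Fin q) (Fin m) ℝ)
    (C : Matrix (Fin m) (Fin q) ℝ)
    (V₂ : Vec q → ℝ) (δ : ℝ) (hC1 : ContDiff ℝ 1 V₂)
    (hOSNI : OSNIStorage (linF A B) (linH C) V₂ δ)
    (a : Fin n → Fin n → ℝ)
    (hsymm : ∀ i j, a i j = a j i)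
    (h01 : ∀ i j, a i j = 0 ∨ a i j = 1)
    (x : Fin n → ℝ → Vec q) (u : Fin n → ℝ → Vec m)
    (htraj : ∀ i, IsTrajectory (linF A B) (x i) (u i)) :
    ∀ t : ℝ,
      deriv (fun s => (1 / 2) * ∑ i, ∑ j, a i j * V₂ (x i s - x j s)) t ≤
        (∑ i, ⟪u i t,
            deriv (fun s => ∑ j, a i j • (linH C (x i s) - linH C (x j s))) t⟫) -
        (δ / 2) * ∑ i, ∑ j, a i j *
          ‖deriv (fun s => linH C (x i s)) t - deriv (fun s => linH C (x j s)) t‖ ^ 2 := by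
  intro t
  set y' : Fin n → Vec m := fun i => linH C (linF A B (x i t) (u i t))
  have hy : ∀ i, HasDerivAt (fun s => linH C (x i s)) (y' i) t := fun i => (htraj i t).linH C
  have hV : ∀ i j, HasDerivAt (fun s => V₂ (x i s - x j s))
      (deriv (fun s => V₂ (x i s - x j s)) t) t := fun i j =>
    ((hC1.differentiable one_ne_zero _).comp t
      ((htraj i t).sub (htraj j t)).differentiableAt).hasDerivAt
  have ha : ∀ i j, 0 ≤ a i j := fun i j => by rcases h01 i j with h | h <;> simp [h]
  rw [(((HasDerivAt.fun_sum fun i _ => HasDerivAt.fun_sum fun j _ =>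
      (hV i j).const_mul (a i j)).const_mul (1 / 2 : ℝ))).deriv]
  simp only [(hy _).deriv, (HasDerivAt.fun_sum fun j _ =>
    ((hy _).fun_sub (hy j)).fun_const_smul (a _ j)).deriv]
  calc (1 / 2) * ∑ i, ∑ j, a i j * deriv (fun s => V₂ (x i s - x j s)) t
      ≤ (1 / 2) * ∑ i, ∑ j, a i j *
          (⟪u i t - u j t, y' i - y' j⟫ - δ * ‖y' i - y' j‖ ^ 2) := by
        gcongr with i _ j _
        · exact ha i j
        · exact hOSNI.deriv_comp_sub_le A B C (htraj i) (htraj j) t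
    _ = _ := by
        simp only [mul_sub, Finset.sum_sub_distrib, sum_sum_mul_inner_sub_sub hsymm,
          mul_left_comm _ δ, ← Finset.mul_sum]
        ring

/-- Let (A,B,C) be a realization of a linear OSNI system with output
strictness δ > 0 (dissipativity sense, storage V₂), and consider n identical copies
connected according to an undirected graph with {0,1} adjacency matrix a, so that the
networked system 𝓛ₙ ⊗ M(s) has stacked input U₂ = (u₁,…,uₙ) and stacked output with
i-th block (Y₂)ᵢ = Σⱼ a_{ij}(yᵢ − yⱼ).  Then
V̂₂(x₁,…,xₙ) = (1/2) Σᵢ Σⱼ a_{ij} V₂(xᵢ − xⱼ) satisfies, along every trajectory,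
d/dt V̂₂ ≤ U₂ᵀ(dY₂/dt) − (δ/2) Σᵢ Σⱼ a_{ij} |ẏᵢ − ẏⱼ|². -/
theorem stmt6 {q m n : ℕ}
    (A : Matrix (Fin q) (Fin q) ℝ) (B : Matrix (Fin q) (Fin m) ℝ)
    (C : Matrix (Fin m) (Fin q) ℝ)
    (V₂ : Vec q → ℝ) (δ : ℝ) (hδ : 0 < δ)
    (hpd : PosDefFn V₂) (hC1 : ContDiff ℝ 1 V₂)
    (hOSNI : OSNIStorage (linF A B) (linH C) V₂ δ)
    (a : Fin n → Fin n → ℝ)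
    (hsymm : ∀ i j, a i j = a j i) (hdiag : ∀ i, a i i = 0)
    (h01 : ∀ i j, a i j = 0 ∨ a i j = 1)
    (x : Fin n → ℝ → Vec q) (u : Fin n → ℝ → Vec m)
    (htraj : ∀ i, IsTrajectory (linF A B) (x i) (u i)) :
    ∀ t : ℝ,
      deriv (fun s => (1 / 2) * ∑ i, ∑ j, a i j * V₂ (x i s - x j s)) t ≤
        (∑ i, ⟪u i t,
            deriv (fun s => ∑ j, a i j • (linH C (x i s) - linH C (x j s))) t⟫) -
        (δ / 2) * ∑ i, ∑ j, a i j *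
          ‖deriv (fun s => linH C (x i s)) t - deriv (fun s => linH C (x j s)) t‖ ^ 2 :=
  stmt6_general A B C V₂ δ hC1 hOSNI a hsymm h01 x u htraj
end
end
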